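/- arXiv:2203.02032 — 2 statements merged into one kernel-verified Lean document; each statement's English description precedes it below -/
import Mathlib

section
/- For every w ∈ 𝔽 with |w| > 1 and every n ≥ 1, the n-th power A_wⁿ of the bounded weighted backward shift A_w on c₀ is chaotic: A_wⁿ possesses a hypercyclic vector and the set of periodic points of A_wⁿ is dense in c₀. -/
open Filter Topology
open scoped ZeroAtInfty

/-!
`A ^ n` is again a weighted backward shift, with weight `w ^ n` and step `n`, so it suffices to
treat a shift `B` with weight `‖v‖ > 1` and step `p ≥ 1`. Eventually-zero sequences are dense in
`c₀`. If `z` vanishes from `p m` on, then `x := z` followed by `(v ^ m)⁻¹ • y` solves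
`B ^ m x = y` and lies within `‖v‖⁻ᵐ ‖y‖` of `z`; so every `y` has a dense set of preimages under
the iterates of `B`, and Birkhoff's transitivity theorem on the separable Banach space `c₀` gives a
hypercyclic vector. Repeating the block `z|[0, p N)` with damping `(v ^ N)⁻¹` from block to block
likewise gives an `N`-periodic point within `‖v‖⁻ᴺ ‖z‖` of `z`.
-/

namespace ZeroAtInftyContinuousMap

variable {E : Type*} [NormedAddCommGroup E]

theorem tendsto_atTop_nat (x : C₀(ℕ, E)) : Tendsto x atTop (𝓝 0) := by
  simpa [cocompact_eq_atTop] using x.zero_at_infty'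

def ofTendstoNat (f : ℕ → E) (hf : Tendsto f atTop (𝓝 0)) : C₀(ℕ, E) :=
  ⟨⟨f, continuous_of_discreteTopology⟩, by rwa [cocompact_eq_atTop]⟩

@[simp]
theorem ofTendstoNat_apply (f : ℕ → E) (hf : Tendsto f atTop (𝓝 0)) (i : ℕ) :
    ofTendstoNat f hf i = f i :=
  rfl

theorem dist_le_of_forall_dist_le {α : Type*} [TopologicalSpace α] {x y : C₀(α, E)} {C : ℝ}
    (hC : 0 ≤ C) (h : ∀ i, dist (x i) (y i) ≤ C) : dist x y ≤ C := by
  rw [← dist_toBCF_eq_dist]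
  exact (BoundedContinuousFunction.dist_le hC).2 h

theorem norm_apply_le {α : Type*} [TopologicalSpace α] (x : C₀(α, E)) (i : α) : ‖x i‖ ≤ ‖x‖ := by
  rw [← norm_toBCF_eq_norm]
  exact x.toBCF.norm_coe_le_norm i

theorem dist_le_of_eq_of_eq_zero {x z : C₀(ℕ, E)} {L : ℕ} {δ : ℝ} (hδ : 0 ≤ δ)
    (heq : ∀ i < L, x i = z i) (hz : ∀ i, L ≤ i → z i = 0) (hx : ∀ i, L ≤ i → ‖x i‖ ≤ δ) :
    dist x z ≤ δ := by
  refine dist_le_of_forall_dist_le hδ fun i => ?_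
  rcases lt_or_ge i L with hi | hi
  · simp [heq i hi, hδ]
  · simpa [hz i hi] using hx i hi

def extendByZero (K : ℕ) (f : Fin K → E) : C₀(ℕ, E) :=
  ofTendstoNat (fun i => if h : i < K then f ⟨i, h⟩ else 0) <|
    tendsto_const_nhds.congr' <| by
      filter_upwards [eventually_ge_atTop K] with i hi
      simp [not_lt.2 hi]

theorem extendByZero_apply (K : ℕ) (f : Fin K → E) (i : ℕ) :
    extendByZero K f i = if h : i < K then f ⟨i, h⟩ else 0 :=
  rfl

theorem lipschitzWith_extendByZero (K : ℕ) : LipschitzWith 1 (extendByZero (E := E) K) :=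
  LipschitzWith.mk_one fun f g => dist_le_of_forall_dist_le dist_nonneg fun i => by
    simp only [extendByZero_apply]
    split_ifs
    · exact dist_le_pi_dist f g _
    · simp

theorem dense_setOf_eventually_eq_zero : Dense {y : C₀(ℕ, E) | ∀ᶠ i in atTop, y i = 0} := by
  refine Metric.dense_iff.2 fun z ε hε => ?_
  obtain ⟨K, hK⟩ := eventually_atTop.1 <|
    (tendsto_zero_iff_norm_tendsto_zero.1 (tendsto_atTop_nat z)).eventually_lt_const (half_pos hε)
  refine ⟨extendByZero K fun i => z i, ?_, eventually_atTop.2 ⟨K, fun i hi => ?_⟩⟩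
  · rw [Metric.mem_ball, dist_comm]
    refine (dist_le_of_eq_of_eq_zero (L := K) (half_pos hε).le (fun i hi => ?_) (fun i hi => ?_)
      fun i hi => (hK i hi).le).trans_lt (half_lt_self hε)
    · simp [extendByZero_apply, hi]
    · simp [extendByZero_apply, not_lt.2 hi]
  · simp [extendByZero_apply, not_lt.2 hi]

instance [TopologicalSpace.SeparableSpace E] : TopologicalSpace.SeparableSpace C₀(ℕ, E) := by
  have hsub : {y : C₀(ℕ, E) | ∀ᶠ i in atTop, y i = 0} ⊆ ⋃ K, Set.range (extendByZero K) := by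
    intro y hy
    obtain ⟨K, hK⟩ := eventually_atTop.1 hy
    refine Set.mem_iUnion.2 ⟨K, fun i => y i, ext fun i => ?_⟩
    rw [extendByZero_apply]
    split_ifs with hi
    · rfl
    · exact (hK i (not_lt.1 hi)).symm
  have hsep := (TopologicalSpace.IsSeparable.iUnion fun K =>
    TopologicalSpace.isSeparable_range (lipschitzWith_extendByZero (E := E) K).continuous).mono
      hsub
  rw [← TopologicalSpace.isSeparable_univ_iff, ← dense_setOf_eventually_eq_zero.closure_eq]
  exact hsep.closure

end ZeroAtInftyContinuousMap

open ZeroAtInftyContinuousMap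

/-- Birkhoff's transitivity theorem. -/
theorem exists_dense_orbit_of_dense_iUnion_preimage {X : Type*} [TopologicalSpace X]
    [BaireSpace X] [SecondCountableTopology X] [Nonempty X] {f : X → X} (hf : Continuous f)
    (htrans : ∀ V : Set X, IsOpen V → V.Nonempty → Dense (⋃ m, f^[m] ⁻¹' V)) :
    ∃ x, Dense (Set.range fun m => f^[m] x) := by
  obtain ⟨b, hbc, hb0, hb⟩ := TopologicalSpace.exists_countable_basis X
  have hne : ∀ V ∈ b, V.Nonempty := fun V hV => Set.nonempty_iff_ne_empty.2 fun h => hb0 (h ▸ hV)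
  have hdense : Dense (⋂ V ∈ b, ⋃ m, f^[m] ⁻¹' V) :=
    dense_biInter_of_isOpen
      (fun V hV => isOpen_iUnion fun m => (hb.isOpen hV).preimage (hf.iterate m)) hbc
      fun V hV => htrans V (hb.isOpen hV) (hne V hV)
  obtain ⟨x, hx⟩ := hdense.nonempty
  refine ⟨x, hb.dense_iff.2 fun V hV _ => ?_⟩
  obtain ⟨m, hm⟩ := Set.mem_iUnion.1 (Set.mem_iInter₂.1 hx V hV)
  exact ⟨_, hm, m, rfl⟩

theorem exists_ge_pow_mul_lt {r : ℝ} (h0 : 0 ≤ r) (h1 : r < 1) (C : ℝ) {ε : ℝ} (hε : 0 < ε)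
    (K : ℕ) : ∃ m, K ≤ m ∧ r ^ m * C < ε := by
  have h : Tendsto (fun m => r ^ m * C) atTop (𝓝 0) := by
    simpa using (tendsto_pow_atTop_nhds_zero_of_lt_one h0 h1).mul_const C
  exact ((eventually_ge_atTop K).and (h.eventually_lt_const hε)).exists

def IsWeightedBackwardShift {𝕜 E : Type*} [NormedField 𝕜] [NormedAddCommGroup E]
    [NormedSpace 𝕜 E] (B : C₀(ℕ, E) →L[𝕜] C₀(ℕ, E)) (v : 𝕜) (p : ℕ) : Prop :=
  ∀ x k, B x k = v • x (k + p)

namespace IsWeightedBackwardShift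

variable {𝕜 E : Type*} [NormedField 𝕜] [NormedAddCommGroup E] [NormedSpace 𝕜 E]
  {B : C₀(ℕ, E) →L[𝕜] C₀(ℕ, E)} {v : 𝕜} {p : ℕ}

theorem pow (hB : IsWeightedBackwardShift B v p) (m : ℕ) :
    IsWeightedBackwardShift (B ^ m) (v ^ m) (p * m) := by
  intro x k
  induction m generalizing x with
  | zero => simp
  | succ m ih =>
    rw [pow_succ, mul_apply_eq_comp, ih, hB, smul_smul, ← pow_succ, mul_add_one, add_assoc]

theorem exists_pow_apply_eq_of_eq_zero (hB : IsWeightedBackwardShift B v p) (hv : v ≠ 0)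
    {z : C₀(ℕ, E)} {m : ℕ} (hz : ∀ i, p * m ≤ i → z i = 0) (y : C₀(ℕ, E)) :
    ∃ x, (B ^ m) x = y ∧ dist x z ≤ ‖(v ^ m)⁻¹‖ * ‖y‖ := by
  set L := p * m
  have hx : Tendsto (fun i => if i < L then z i else (v ^ m)⁻¹ • y (i - L)) atTop (𝓝 0) := by
    refine Tendsto.congr' ?_ (by simpa using
      ((tendsto_atTop_nat y).comp (tendsto_sub_atTop_nat L)).const_smul (v ^ m)⁻¹)
    filter_upwards [eventually_ge_atTop L] with i hi
    simp [not_lt.2 hi]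
  refine ⟨ofTendstoNat _ hx, ext fun k => ?_, dist_le_of_eq_of_eq_zero (L := L) (by positivity)
    (fun i hi => by simp [hi]) hz fun i hi => ?_⟩
  · rw [hB.pow, ofTendstoNat_apply, if_neg (by omega), Nat.add_sub_cancel, smul_smul,
      mul_inv_cancel₀ (pow_ne_zero m hv), one_smul]
  · simpa [not_lt.2 hi, norm_smul] using
      mul_le_mul_of_nonneg_left (norm_apply_le y (i - L)) (norm_nonneg (v ^ m)⁻¹)

theorem exists_pow_apply_eq_self_of_eq_zero (hB : IsWeightedBackwardShift B v p)
    (hv : 1 < ‖v‖) (hp : 0 < p) {z : C₀(ℕ, E)} {N : ℕ} (hN : 0 < N)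
    (hz : ∀ i, p * N ≤ i → z i = 0) :
    ∃ x, (B ^ N) x = x ∧ dist x z ≤ ‖(v ^ N)⁻¹‖ * ‖z‖ := by
  set L := p * N
  set c := (v ^ N)⁻¹
  have hL : 0 < L := Nat.mul_pos hp hN
  have hc : ‖c‖ < 1 := by
    simpa [c, norm_inv, norm_pow] using inv_lt_one_of_one_lt₀ (one_lt_pow₀ hv hN.ne')
  have hbound : ∀ i, ‖c ^ (i / L) • z (i % L)‖ ≤ ‖c‖ ^ (i / L) * ‖z‖ := fun i => by
    rw [norm_smul, norm_pow]
    exact mul_le_mul_of_nonneg_left (norm_apply_le z _) (by positivity)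
  have hx : Tendsto (fun i => c ^ (i / L) • z (i % L)) atTop (𝓝 0) :=
    squeeze_zero_norm hbound <| by simpa using
      ((tendsto_pow_atTop_nhds_zero_of_lt_one (norm_nonneg c) hc).comp
        (Nat.tendsto_div_const_atTop hL.ne')).mul_const ‖z‖
  refine ⟨ofTendstoNat _ hx, ext fun k => ?_, dist_le_of_eq_of_eq_zero (L := L) (by positivity)
    (fun i hi => ?_) hz fun i hi => ?_⟩
  · have hvc : v ^ N * c = 1 := mul_inv_cancel₀ (pow_ne_zero N (norm_pos_iff.1 (by linarith)))
    rw [hB.pow, ofTendstoNat_apply, ofTendstoNat_apply, Nat.add_div_right k hL,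
      Nat.add_mod_right, smul_smul, pow_succ, mul_left_comm, hvc, mul_one]
  · simp [Nat.div_eq_of_lt hi, Nat.mod_eq_of_lt hi]
  · refine (hbound i).trans (mul_le_mul_of_nonneg_right ?_ (norm_nonneg z))
    simpa using pow_le_pow_of_le_one (norm_nonneg c) hc.le ((Nat.one_le_div_iff hL).2 hi)

theorem dense_setOf_exists_pow_apply_eq (hB : IsWeightedBackwardShift B v p) (hv : 1 < ‖v‖)
    (hp : 0 < p) (y : C₀(ℕ, E)) : Dense {x | ∃ m, (B ^ m) x = y} := by
  refine dense_closure.1 <| dense_setOf_eventually_eq_zero.mono fun z hz =>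
    Metric.mem_closure_iff.2 fun ε hε => ?_
  obtain ⟨K, hK⟩ := eventually_atTop.1 hz
  obtain ⟨m, hKm, hm⟩ := exists_ge_pow_mul_lt (norm_nonneg v⁻¹)
    (by simpa using inv_lt_one_of_one_lt₀ hv) ‖y‖ hε K
  obtain ⟨x, hxy, hxz⟩ := hB.exists_pow_apply_eq_of_eq_zero (norm_pos_iff.1 (by linarith))
    (fun i hi => hK i (hKm.trans ((Nat.le_mul_of_pos_left m hp).trans hi))) y
  exact ⟨x, ⟨m, hxy⟩, dist_comm z x ▸ hxz.trans_lt (by simpa using hm)⟩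

theorem dense_setOf_pow_apply_eq_self (hB : IsWeightedBackwardShift B v p) (hv : 1 < ‖v‖)
    (hp : 0 < p) : Dense {x | ∃ N, 1 ≤ N ∧ (B ^ N) x = x} := by
  refine dense_closure.1 <| dense_setOf_eventually_eq_zero.mono fun z hz =>
    Metric.mem_closure_iff.2 fun ε hε => ?_
  obtain ⟨K, hK⟩ := eventually_atTop.1 hz
  obtain ⟨N, hKN, hN⟩ := exists_ge_pow_mul_lt (norm_nonneg v⁻¹)
    (by simpa using inv_lt_one_of_one_lt₀ hv) ‖z‖ hε (max K 1)
  obtain ⟨x, hxx, hxz⟩ := hB.exists_pow_apply_eq_self_of_eq_zero hv hp (by omega : 0 < N)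
    (fun i hi => hK i ((le_of_max_le_left hKN).trans ((Nat.le_mul_of_pos_left N hp).trans hi)))
  exact ⟨x, ⟨N, by omega, hxx⟩, dist_comm z x ▸ hxz.trans_lt (by simpa using hN)⟩

theorem exists_dense_orbit [CompleteSpace E] [TopologicalSpace.SeparableSpace E]
    (hB : IsWeightedBackwardShift B v p) (hv : 1 < ‖v‖) (hp : 0 < p) :
    ∃ x, Dense (Set.range fun m => (B ^ m) x) := by
  simp only [FunLike.coe_pow_eq_iterate]
  refine exists_dense_orbit_of_dense_iUnion_preimage B.continuous fun V _ hV => ?_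
  obtain ⟨y, hy⟩ := hV
  refine (hB.dense_setOf_exists_pow_apply_eq hv hp y).mono fun x hx => ?_
  obtain ⟨m, hm⟩ := hx
  exact Set.mem_iUnion.2 ⟨m, by rwa [Set.mem_preimage, ← FunLike.coe_pow_eq_iterate, hm]⟩

end IsWeightedBackwardShift

/-- For every `w` with `‖w‖ > 1` and every `n ≥ 1`, the `n`-th power `A_w ^ n`
of the bounded weighted backward shift `A_w` on `c₀` is chaotic: `A_w ^ n` possesses a
hypercyclic vector and the set of periodic points of `A_w ^ n` is dense in `c₀`. -/
theorem bounded_backward_shift_powers_chaotic_on_c0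
    (𝕜 : Type*) [RCLike 𝕜] (w : 𝕜) (hw : 1 < ‖w‖)
    (A : C₀(ℕ, 𝕜) →L[𝕜] C₀(ℕ, 𝕜))
    (hA : ∀ (x : C₀(ℕ, 𝕜)) (k : ℕ), A x k = w * x (k + 1))
    (n : ℕ) (hn : 1 ≤ n) :
    (∃ x : C₀(ℕ, 𝕜), Dense (Set.range fun m : ℕ => ((A ^ n) ^ m) x)) ∧
      Dense {x : C₀(ℕ, 𝕜) | ∃ N : ℕ, 1 ≤ N ∧ ((A ^ n) ^ N) x = x} := by
  have hAn : IsWeightedBackwardShift (A ^ n) (w ^ n) n := by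
    simpa using (show IsWeightedBackwardShift A w 1 from hA).pow n
  have hwn : 1 < ‖w ^ n‖ := by
    rw [norm_pow]
    exact one_lt_pow₀ hw (by omega)
  exact ⟨hAn.exists_dense_orbit hwn hn, hAn.dense_setOf_pow_apply_eq_self hwn hn⟩
end

section
/- For every w ∈ 𝔽 with |w| > 1 and every n ≥ 1, the n-th power A_wⁿ of the unbounded weighted backward shift A_w in c₀ is chaotic: there exists x whose orbit under A_wⁿ is dense in c₀, and the set of periodic points of A_wⁿ is dense in c₀. -/
open Filter Topology

/-- Sequences vanishing at infinity (the space `c₀`, here as a set of raw sequences;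
the Lean index `k` corresponds to the paper's index `k + 1`). -/
def c0Set (𝕜 : Type*) [RCLike 𝕜] : Set (ℕ → 𝕜) :=
  {x | Tendsto x atTop (nhds (0 : 𝕜))}

/-- The action of the `n`-th power `A_wⁿ` of the unbounded weighted backward shift
(`powAct w 0 = id`; the `m`-th power of `A_wⁿ` acts as `powAct w (n * m)`):
`(A_wⁿ x)_k = (∏_{j=k}^{k+n-1} w^j) x_{k+n}` for the paper's `1`-based index `k ≥ 1`,
i.e. `(A_wⁿ x) k = (∏_{j=k+1}^{k+n} w^j) * x (k+n)` in `0`-based indexing. -/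
def powAct {𝕜 : Type*} [RCLike 𝕜] (w : 𝕜) (n : ℕ) (x : ℕ → 𝕜) : ℕ → 𝕜 :=
  fun k => (∏ j ∈ Finset.Ico (k + 1) (k + n + 1), w ^ j) * x (k + n)

/-- The maximal domain `D(A_wⁿ) = {x ∈ c₀ : A_wⁿ x ∈ c₀}`. -/
def powDom {𝕜 : Type*} [RCLike 𝕜] (w : 𝕜) (n : ℕ) : Set (ℕ → 𝕜) :=
  {x | x ∈ c0Set 𝕜 ∧ powAct w n x ∈ c0Set 𝕜}

/-- The sup-norm `‖x‖_∞ = sup_k |x_k|` of a sequence. -/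
noncomputable def supNorm {𝕜 : Type*} [RCLike 𝕜] (f : ℕ → 𝕜) : ℝ :=
  ⨆ k, ‖f k‖

/-!
Let `A⁻ᵖ z` (`powRightInv w p z`) be the right inverse of `Aᵖ`,
`(A⁻ᵖ z)ₖ₊ₚ = zₖ / (wᵏ⁺¹ ⋯ wᵏ⁺ᵖ)`, so that `‖A⁻ᵖ z‖ ≤ ‖z‖ / ‖w‖ᵖ`. For finitely supported `zᵢ`
placed in disjoint blocks starting at `s₀ < s₁ < ⋯`, the vector `x = ∑ᵢ A⁻ˢⁱ zᵢ`
(`blockSum w s z`) satisfies `Aˢⁱ x = zᵢ + ∑_{j > i} A^{-(sⱼ - sᵢ)} zⱼ`: the earlier blocks are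
pushed off the left end. If the gaps grow fast enough the tail is small and every `Aᵖ x` lies
in `c₀`. Running through a dense family of finitely supported sequences, each one recurring
infinitely often, gives a hypercyclic vector; repeating the truncation of `y` at the positions
`0, p, 2p, …` gives a `p`-periodic point close to `y`.
-/

section WeightedShift

variable {𝕜 : Type*} [RCLike 𝕜] {w : 𝕜}

noncomputable def shiftWeight (w : 𝕜) (k p : ℕ) : 𝕜 :=
  ∏ j ∈ Finset.Ico (k + 1) (k + p + 1), w ^ j

lemma powAct_apply (p : ℕ) (x : ℕ → 𝕜) (k : ℕ) :
    powAct w p x k = shiftWeight w k p * x (k + p) := rfl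

@[simp] lemma shiftWeight_zero (k : ℕ) : shiftWeight w k 0 = 1 := by
  simp [shiftWeight]

lemma shiftWeight_add (k p r : ℕ) :
    shiftWeight w k (p + r) = shiftWeight w k p * shiftWeight w (k + p) r := by
  rw [shiftWeight, shiftWeight, shiftWeight, ← add_assoc,
    Finset.prod_Ico_consecutive _ (by omega) (by omega)]

lemma pow_le_norm_shiftWeight (hw : 1 ≤ ‖w‖) (k p : ℕ) : ‖w‖ ^ p ≤ ‖shiftWeight w k p‖ := by
  rw [shiftWeight, norm_prod]
  calc ‖w‖ ^ p = ∏ _j ∈ Finset.Ico (k + 1) (k + p + 1), ‖w‖ := by simp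
    _ ≤ ∏ j ∈ Finset.Ico (k + 1) (k + p + 1), ‖w ^ j‖ :=
      Finset.prod_le_prod (fun _ _ => norm_nonneg _) fun j hj => by
        rw [norm_pow]
        exact le_self_pow₀ hw (by have := (Finset.mem_Ico.mp hj).1; omega)

lemma shiftWeight_ne_zero (hw : w ≠ 0) (k p : ℕ) : shiftWeight w k p ≠ 0 :=
  Finset.prod_ne_zero_iff.mpr fun _ _ => pow_ne_zero _ hw

@[simp] lemma powAct_zero (x : ℕ → 𝕜) : powAct w 0 x = x := by
  ext k; simp [powAct_apply]

lemma powAct_eq_zero {z : ℕ → 𝕜} {K p : ℕ} (hz : ∀ k, K ≤ k → z k = 0) (hp : K ≤ p) :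
    powAct w p z = 0 := by
  ext k; simp [powAct_apply, hz (k + p) (by omega)]

end WeightedShift

section RightInverse

variable {𝕜 : Type*} [RCLike 𝕜] {w : 𝕜}

noncomputable def powRightInv (w : 𝕜) (p : ℕ) (z : ℕ → 𝕜) : ℕ → 𝕜 :=
  fun q => if p ≤ q then z (q - p) / shiftWeight w (q - p) p else 0

lemma powAct_powRightInv_of_le (hw : w ≠ 0) {p r : ℕ} (h : p ≤ r) (z : ℕ → 𝕜) :
    powAct w p (powRightInv w r z) = powRightInv w (r - p) z := by
  ext k
  simp only [powAct_apply, powRightInv]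
  by_cases hk : r - p ≤ k
  · have hsplit : shiftWeight w (k + p - r) r =
        shiftWeight w (k - (r - p)) (r - p) * shiftWeight w k p := by
      rw [show r = (r - p) + p by omega, shiftWeight_add]
      congr 2 <;> omega
    have := shiftWeight_ne_zero hw (k - (r - p)) (r - p)
    have := shiftWeight_ne_zero hw k p
    rw [if_pos (by omega), if_pos hk, hsplit, show k + p - r = k - (r - p) by omega]
    field_simp
  · rw [if_neg (by omega), if_neg hk, mul_zero]

lemma powAct_powRightInv_of_ge (hw : w ≠ 0) {p r : ℕ} (h : r ≤ p) (z : ℕ → 𝕜) :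
    powAct w p (powRightInv w r z) = powAct w (p - r) z := by
  ext k
  have hsplit : shiftWeight w k p = shiftWeight w k (p - r) * shiftWeight w (k + (p - r)) r := by
    rw [← shiftWeight_add, Nat.sub_add_cancel h]
  have := shiftWeight_ne_zero hw (k + (p - r)) r
  simp only [powAct_apply, powRightInv, if_pos (show r ≤ k + p by omega), hsplit,
    show k + p - r = k + (p - r) by omega]
  field_simp

lemma powAct_powRightInv_self (hw : w ≠ 0) (p : ℕ) (z : ℕ → 𝕜) :
    powAct w p (powRightInv w p z) = z := by
  simp [powAct_powRightInv_of_ge hw le_rfl]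

lemma norm_powRightInv_le (hw : 1 ≤ ‖w‖) {z : ℕ → 𝕜} {B : ℝ} (hB : ∀ k, ‖z k‖ ≤ B)
    (p q : ℕ) : ‖powRightInv w p z q‖ ≤ B / ‖w‖ ^ p := by
  have hB0 : 0 ≤ B := (norm_nonneg _).trans (hB 0)
  unfold powRightInv
  split_ifs
  · rw [norm_div]
    exact div_le_div₀ hB0 (hB _) (by positivity) (pow_le_norm_shiftWeight hw _ _)
  · simp only [norm_zero]; positivity

lemma le_and_lt_of_powRightInv_ne_zero {z : ℕ → 𝕜} {K : ℕ} (hz : ∀ k, K ≤ k → z k = 0) {p q : ℕ}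
    (h : powRightInv w p z q ≠ 0) : p ≤ q ∧ q < p + K := by
  unfold powRightInv at h
  split_ifs at h with hpq
  · refine ⟨hpq, ?_⟩
    by_contra! hq
    simp [hz (q - p) (by omega)] at h
  · exact absurd rfl h

end RightInverse

lemma norm_tsum_le_of_support_subsingleton {ι E : Type*} [Nonempty ι] [NormedAddCommGroup E]
    {g : ι → E} (hg : (Function.support g).Subsingleton) {C : ℝ} (hC : ∀ i, ‖g i‖ ≤ C) :
    ‖∑' i, g i‖ ≤ C := by
  by_cases h : ∃ i, g i ≠ 0
  · obtain ⟨i, hi⟩ := h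
    rw [tsum_eq_single i fun j hj => by_contra fun hgj => hj (hg hgj hi)]
    exact hC i
  · push Not at h
    simpa [h] using (norm_nonneg _).trans (hC (Classical.arbitrary ι))

section BlockSum

variable {𝕜 : Type*} [RCLike 𝕜] {w : 𝕜}

noncomputable def blockSum (w : 𝕜) (s : ℕ → ℕ) (z : ℕ → ℕ → 𝕜) : ℕ → 𝕜 :=
  fun q => ∑' i, powRightInv w (s i) (z i) q

lemma powAct_blockSum (p : ℕ) (s : ℕ → ℕ) (z : ℕ → ℕ → 𝕜) (k : ℕ) :
    powAct w p (blockSum w s z) k = ∑' i, powAct w p (powRightInv w (s i) (z i)) k := by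
  simp only [powAct_apply, blockSum, tsum_mul_left]

variable {s : ℕ → ℕ} {z : ℕ → ℕ → 𝕜} {K : ℕ → ℕ}

lemma support_powAct_powRightInv_subsingleton (hz : ∀ i k, K i ≤ k → z i k = 0)
    (hs : ∀ i, s i + K i ≤ s (i + 1)) (p k : ℕ) :
    (Function.support fun i => powAct w p (powRightInv w (s i) (z i)) k).Subsingleton := by
  have hmono : Monotone s := monotone_nat_of_le_succ fun i => (Nat.le_add_right _ _).trans (hs i)
  have key : ∀ i j, i < j → powRightInv w (s i) (z i) (k + p) ≠ 0 →
      powRightInv w (s j) (z j) (k + p) = 0 := fun i j hij hi => by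
    by_contra hj
    have := (le_and_lt_of_powRightInv_ne_zero (hz i) hi).2
    have := (le_and_lt_of_powRightInv_ne_zero (hz j) hj).1
    have := hs i
    have : s (i + 1) ≤ s j := hmono hij
    omega
  intro i hi j hj
  simp only [Function.mem_support, powAct_apply, mul_ne_zero_iff] at hi hj
  by_contra hij
  rcases Nat.lt_or_gt_of_ne hij with h | h
  · exact hj.2 (key i j h hi.2)
  · exact hi.2 (key j i h hj.2)


lemma norm_powAct_blockSum_sub_le (hw : 1 ≤ ‖w‖) (hz : ∀ i k, K i ≤ k → z i k = 0)
    (hs : ∀ i, s i + K i ≤ s (i + 1)) {B : ℕ → ℝ} (hB : ∀ i k, ‖z i k‖ ≤ B i) {i : ℕ} {δ : ℝ}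
    (hδ : ∀ j, i < j → B j / ‖w‖ ^ (s j - s i) ≤ δ) (k : ℕ) :
    ‖powAct w (s i) (blockSum w s z) k - z i k‖ ≤ δ := by
  have hw0 : w ≠ 0 := norm_pos_iff.mp (one_pos.trans_le hw)
  have hmono : Monotone s := monotone_nat_of_le_succ fun i => (Nat.le_add_right _ _).trans (hs i)
  have hδ0 : 0 ≤ δ :=
    (div_nonneg ((norm_nonneg _).trans (hB _ 0)) (by positivity)).trans (hδ _ (lt_add_one i))
  set T := fun j => powAct w (s i) (powRightInv w (s j) (z j)) k
  have hT_lt : ∀ j < i, T j = 0 := fun j hj => by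
    have : s (j + 1) ≤ s i := hmono hj
    simp only [T, powAct_powRightInv_of_ge hw0 (hmono hj.le),
      powAct_eq_zero (hz j) (show K j ≤ s i - s j by have := hs j; omega), Pi.zero_apply]
  have hT_gt : ∀ j, i < j → T j = powRightInv w (s j - s i) (z j) k := fun j hj => by
    simp only [T, powAct_powRightInv_of_le hw0 (hmono hj.le)]
  rw [powAct_blockSum]
  by_cases hk : k < K i
  · have hT : ∀ j, j ≠ i → T j = 0 := fun j hji => by
      rcases Nat.lt_or_gt_of_ne hji with h | h
      · exact hT_lt j h
      · rw [hT_gt j h]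
        by_contra hne
        have := (le_and_lt_of_powRightInv_ne_zero (hz j) hne).1
        have := hs i
        have : s (i + 1) ≤ s j := hmono h
        omega
    rw [tsum_eq_single i hT]
    simpa [T, powAct_powRightInv_self hw0] using hδ0
  · rw [hz i k (not_lt.mp hk), sub_zero]
    refine norm_tsum_le_of_support_subsingleton
      (support_powAct_powRightInv_subsingleton hz hs _ _) fun j => show ‖T j‖ ≤ δ from ?_
    rcases lt_trichotomy j i with h | rfl | h
    · simpa [hT_lt j h] using hδ0
    · simpa [T, powAct_powRightInv_self hw0, hz j k (not_lt.mp hk)] using hδ0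
    · rw [hT_gt j h]
      exact (norm_powRightInv_le hw (hB j) _ _).trans (hδ j h)

lemma powAct_blockSum_mem_c0Set (hw : 1 ≤ ‖w‖) (hz : ∀ i k, K i ≤ k → z i k = 0)
    (hs : ∀ i, s i + K i ≤ s (i + 1)) (hs_mono : StrictMono s) {B : ℕ → ℝ}
    (hB : ∀ i k, ‖z i k‖ ≤ B i) (hlim : Tendsto (fun i => B i / ‖w‖ ^ s i) atTop (𝓝 0))
    (p : ℕ) : powAct w p (blockSum w s z) ∈ c0Set 𝕜 := by
  have hw0 : w ≠ 0 := norm_pos_iff.mp (one_pos.trans_le hw)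
  refine NormedAddGroup.tendsto_nhds_zero.mpr fun δ hδ => ?_
  have hlim' : Tendsto (fun i => ‖w‖ ^ p * (B i / ‖w‖ ^ s i)) atTop (𝓝 0) := by
    simpa using hlim.const_mul (‖w‖ ^ p)
  obtain ⟨J, hJ⟩ := ((hlim'.eventually (gt_mem_nhds (half_pos hδ))).and
    (eventually_ge_atTop p)).exists_forall_of_atTop
  filter_upwards [eventually_ge_atTop (s J)] with k hk
  rw [powAct_blockSum]
  refine (norm_tsum_le_of_support_subsingleton
    (support_powAct_powRightInv_subsingleton hz hs _ _) fun j => ?_).trans_lt (half_lt_self hδ)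
  by_cases hj : j < J
  · -- block `j` lies entirely before `s J ≤ k`
    have hzero : powRightInv w (s j) (z j) (k + p) = 0 := by
      by_contra hne
      have := (le_and_lt_of_powRightInv_ne_zero (hz j) hne).2
      have := hs j
      have : s (j + 1) ≤ s J := hs_mono.monotone hj
      omega
    rw [powAct_apply, hzero, mul_zero, norm_zero]
    exact (half_pos hδ).le
  · obtain ⟨hjB, hpj⟩ := hJ j (not_lt.mp hj)
    have hps : p ≤ s j := hpj.trans (hs_mono.id_le j)
    rw [powAct_powRightInv_of_le hw0 hps]
    refine (norm_powRightInv_le hw (hB j) _ _).trans (le_of_eq_of_le ?_ hjB.le)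
    have hpow : ‖w‖ ^ s j = ‖w‖ ^ (s j - p) * ‖w‖ ^ p := by
      rw [← pow_add, Nat.sub_add_cancel hps]
    rw [mul_div_assoc', div_eq_div_iff (by positivity) (by positivity), hpow]
    ring

end BlockSum

lemma norm_le_sum_range_of_eq_zero {E : Type*} [NormedAddCommGroup E] {z : ℕ → E} {K : ℕ}
    (hz : ∀ k, K ≤ k → z k = 0) (k : ℕ) : ‖z k‖ ≤ ∑ j ∈ Finset.range K, ‖z j‖ := by
  by_cases hk : k < K
  · exact Finset.single_le_sum (f := fun j => ‖z j‖) (fun _ _ => norm_nonneg _)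
      (Finset.mem_range.mpr hk)
  · rw [hz k (not_lt.mp hk), norm_zero]
    positivity

lemma exists_finitelySupported_seq_frequently_near (𝕜 : Type*) [RCLike 𝕜] :
    ∃ (z : ℕ → ℕ → 𝕜) (K : ℕ → ℕ), (∀ i k, K i ≤ k → z i k = 0) ∧
      ∀ y ∈ c0Set 𝕜, ∀ ε > 0, ∀ i₀, ∃ i ≥ i₀, ∀ k, ‖z i k - y k‖ ≤ ε := by
  obtain ⟨d, hd⟩ := TopologicalSpace.exists_dense_seq 𝕜
  let l : ℕ → List ℕ := fun i => Denumerable.ofNat (List ℕ) i.unpair.2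
  refine ⟨fun i k => ((l i).map d).getD k 0, fun i => (l i).length,
    fun i k hk => List.getD_eq_default _ _ (by simpa using hk), ?_⟩
  intro y hy ε hε i₀
  obtain ⟨K₀, hK₀⟩ := eventually_atTop.mp (NormedAddGroup.tendsto_nhds_zero.mp hy ε hε)
  choose c hc using fun k => hd.exists_dist_lt (y k) hε
  refine ⟨Nat.pair i₀ (Encodable.encode ((List.range K₀).map c)), Nat.left_le_pair _ _,
    fun k => ?_⟩
  simp only [l, Nat.unpair_pair, Denumerable.ofNat_encode, List.map_map,
    List.getD_eq_getElem?_getD, List.getElem?_map]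
  by_cases hk : k < K₀
  · simpa [hk, dist_eq_norm, norm_sub_rev] using (hc k).le
  · simpa [hk] using (hK₀ k (not_lt.mp hk)).le

lemma supNorm_sub_lt {𝕜 : Type*} [RCLike 𝕜] {a b y : ℕ → 𝕜} {δ₁ δ₂ ε : ℝ}
    (hab : ∀ k, ‖a k - b k‖ ≤ δ₁) (hby : ∀ k, ‖b k - y k‖ ≤ δ₂) (h : δ₁ + δ₂ < ε) :
    supNorm (a - y) < ε :=
  (ciSup_le fun k => (norm_sub_le_norm_sub_add_norm_sub _ _ _).trans
    (add_le_add (hab k) (hby k))).trans_lt h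

section Chaos

variable {𝕜 : Type*} [RCLike 𝕜] {w : 𝕜}

lemma tendsto_div_pow_norm (hw : 1 < ‖w‖) (C : ℝ) :
    Tendsto (fun t : ℕ => C / ‖w‖ ^ t) atTop (𝓝 0) :=
  tendsto_const_nhds.div_atTop (tendsto_pow_atTop_atTop_of_one_lt hw)

theorem exists_hypercyclic_vector_powAct (hw : 1 < ‖w‖) {n : ℕ} (hn : 1 ≤ n) :
    ∃ x : ℕ → 𝕜, (∀ p, powAct w p x ∈ c0Set 𝕜) ∧
      ∀ y ∈ c0Set 𝕜, ∀ ε > (0 : ℝ), ∃ m : ℕ, supNorm (powAct w (n * m) x - y) < ε := by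
  obtain ⟨z, K, hz, hnear⟩ := exists_finitelySupported_seq_frequently_near 𝕜
  set B : ℕ → ℝ := fun i => ∑ k ∈ Finset.range (K i), ‖z i k‖
  have hB : ∀ i k, ‖z i k‖ ≤ B i := fun i => norm_le_sum_range_of_eq_zero (hz i)
  -- the gap `t i` before block `i + 1` is long enough to hold block `i` and to damp `z (i + 1)`
  have hgap : ∀ i, ∃ t, K i < t ∧ B (i + 1) / ‖w‖ ^ t ≤ (1 / 2) ^ (i + 1) := fun i =>
    ((eventually_gt_atTop (K i)).and ((tendsto_div_pow_norm hw _).eventually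
      (eventually_le_nhds (by positivity)))).exists
  choose t ht_gt ht_le using hgap
  set s : ℕ → ℕ := fun i => n * ∑ j ∈ Finset.range i, t j
  have hs_succ : ∀ i, s (i + 1) = s i + n * t i := fun i => by
    simp only [s, Finset.sum_range_succ, mul_add]
  have ht_le_nt : ∀ i, t i ≤ n * t i := fun i => Nat.le_mul_of_pos_left _ hn
  have hs : ∀ i, s i + K i ≤ s (i + 1) := fun i => by
    have := ht_gt i; have := ht_le_nt i; rw [hs_succ]; omega
  have hs_mono : StrictMono s := strictMono_nat_of_lt_succ fun i => by
    have := ht_gt i; have := ht_le_nt i; rw [hs_succ]; omega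
  have hdamp : ∀ i e, t i ≤ e → B (i + 1) / ‖w‖ ^ e ≤ (1 / 2) ^ (i + 1) := fun i e he =>
    (div_le_div_of_nonneg_left ((norm_nonneg _).trans (hB _ 0)) (by positivity)
      (pow_le_pow_right₀ hw.le he)).trans (ht_le i)
  have hlim : Tendsto (fun i => B i / ‖w‖ ^ s i) atTop (𝓝 0) := by
    refine (tendsto_add_atTop_iff_nat 1).mp (squeeze_zero (fun i => by positivity)
      (fun i => hdamp i _ ?_) ((tendsto_pow_atTop_nhds_zero_of_lt_one (by norm_num)
        (by norm_num : (1 / 2 : ℝ) < 1)).comp (tendsto_add_atTop_nat 1)))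
    rw [hs_succ]; have := ht_le_nt i; omega
  refine ⟨blockSum w s z, powAct_blockSum_mem_c0Set hw.le hz hs hs_mono hB hlim, ?_⟩
  intro y hy ε hε
  obtain ⟨i₁, hi₁⟩ := exists_pow_lt_of_lt_one (by positivity : 0 < ε / 4)
    (by norm_num : (1 / 2 : ℝ) < 1)
  obtain ⟨i, hi, hzi⟩ := hnear y hy (ε / 4) (by positivity) i₁
  have htail : ∀ j, i < j → B j / ‖w‖ ^ (s j - s i) ≤ ε / 4 := by
    rintro (_ | j) hij
    · omega
    · have : s j + n * t j - s i ≥ t j := by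
        have : s i ≤ s j := hs_mono.monotone (by omega); have := ht_le_nt j; omega
      refine (hdamp j _ (by rw [hs_succ]; exact this)).trans (le_trans ?_ hi₁.le)
      exact pow_le_pow_of_le_one (by norm_num) (by norm_num) (by omega)
  exact ⟨∑ j ∈ Finset.range i, t j, supNorm_sub_lt
    (norm_powAct_blockSum_sub_le hw.le hz hs hB htail) hzi (by linarith)⟩

theorem eventually_exists_periodic_near (hw : 1 < ‖w‖) {y : ℕ → 𝕜} (hy : y ∈ c0Set 𝕜)
    {ε : ℝ} (hε : 0 < ε) :
    ∀ᶠ p in atTop, ∃ x : ℕ → 𝕜,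
      (∀ r, powAct w r x ∈ c0Set 𝕜) ∧ powAct w p x = x ∧ supNorm (x - y) < ε := by
  obtain ⟨K, hK⟩ := eventually_atTop.mp
    (NormedAddGroup.tendsto_nhds_zero.mp hy (ε / 4) (by positivity))
  set v : ℕ → 𝕜 := fun k => if k < K then y k else 0
  have hv : ∀ k, K ≤ k → v k = 0 := fun k hk => if_neg (not_lt.mpr hk)
  have hvy : ∀ k, ‖v k - y k‖ ≤ ε / 4 := fun k => by
    by_cases hk : k < K
    · simpa [v, hk] using (by positivity : 0 ≤ ε / 4)
    · simpa [v, hk] using (hK k (not_lt.mp hk)).le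
  set B := ∑ k ∈ Finset.range K, ‖v k‖
  have hB : ∀ k, ‖v k‖ ≤ B := norm_le_sum_range_of_eq_zero hv
  filter_upwards [eventually_gt_atTop K,
    (tendsto_div_pow_norm hw B).eventually (eventually_le_nhds (by positivity : 0 < ε / 4))]
    with p hKp hBp
  set s : ℕ → ℕ := fun m => m * p
  have hs : ∀ m, s m + K ≤ s (m + 1) := fun m => by simp only [s, add_mul, one_mul]; omega
  have hs_mono : StrictMono s := fun a b h => Nat.mul_lt_mul_of_pos_right h (by omega)
  have hlim : Tendsto (fun m => B / ‖w‖ ^ s m) atTop (𝓝 0) :=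
    (tendsto_div_pow_norm hw B).comp hs_mono.tendsto_atTop
  have hw0 : w ≠ 0 := norm_pos_iff.mp (one_pos.trans hw)
  refine ⟨blockSum w s fun _ => v,
    powAct_blockSum_mem_c0Set hw.le (fun _ => hv) hs hs_mono (fun _ => hB) hlim, ?_, ?_⟩
  · ext k
    rw [powAct_blockSum, blockSum,
      ← Nat.succ_injective.tsum_eq (f := fun m => powAct w p (powRightInv w (s m) v) k)]
    · congr 1
      ext m
      rw [powAct_powRightInv_of_le hw0 (Nat.le_mul_of_pos_left p m.succ_pos)]
      simp only [s, Nat.succ_mul, Nat.add_sub_cancel]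
    · rintro (_ | m) h
      · simp [s, powAct_powRightInv_of_ge hw0, powAct_eq_zero hv hKp.le] at h
      · exact ⟨m, rfl⟩
  · have htail : ∀ j, 0 < j → B / ‖w‖ ^ (s j - s 0) ≤ ε / 4 := fun j hj =>
      (div_le_div_of_nonneg_left ((norm_nonneg _).trans (hB 0)) (by positivity)
        (pow_le_pow_right₀ hw.le (by simpa [s] using Nat.le_mul_of_pos_left p hj))).trans hBp
    have hxv := norm_powAct_blockSum_sub_le hw.le (fun _ => hv) hs (fun _ => hB) htail
    simp only [s, zero_mul, powAct_zero] at hxv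
    exact supNorm_sub_lt hxv hvy (by linarith)

end Chaos

/-- For every `w` with `‖w‖ > 1` and every `n ≥ 1`, the `n`-th power `A_wⁿ`
of the unbounded weighted backward shift `A_w` in `c₀` is chaotic: there exists `x` whose
orbit under `A_wⁿ` (i.e. `{A_w^{n m} x : m ≥ 0}`) is dense in `c₀` (w.r.t. the sup-norm),
and the set of periodic points of `A_wⁿ` is dense in `c₀`. -/
theorem unbounded_backward_shift_powers_chaotic
    (𝕜 : Type*) [RCLike 𝕜] (w : 𝕜) (hw : 1 < ‖w‖) (n : ℕ) (hn : 1 ≤ n) :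
    (∃ x : ℕ → 𝕜, (∀ m : ℕ, 1 ≤ m → x ∈ powDom w (n * m)) ∧
      ∀ y ∈ c0Set 𝕜, ∀ ε > (0 : ℝ), ∃ m : ℕ, supNorm (powAct w (n * m) x - y) < ε) ∧
    (∀ y ∈ c0Set 𝕜, ∀ ε > (0 : ℝ),
      ∃ x : ℕ → 𝕜, (∃ N : ℕ, 1 ≤ N ∧ x ∈ powDom w (n * N) ∧ powAct w (n * N) x = x) ∧
        supNorm (x - y) < ε) := by
  refine ⟨?_, fun y hy ε hε => ?_⟩
  · obtain ⟨x, hdom, hdense⟩ := exists_hypercyclic_vector_powAct hw hn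
    exact ⟨x, fun m _ => ⟨by simpa using hdom 0, hdom _⟩, hdense⟩
  · have hperiodic := (tendsto_id.const_mul_atTop' hn).eventually
      (eventually_exists_periodic_near hw hy hε)
    obtain ⟨N, hN, x, hdom, hper, hnear⟩ := ((eventually_ge_atTop 1).and hperiodic).exists
    exact ⟨x, ⟨N, hN, ⟨by simpa using hdom 0, hdom _⟩, hper⟩, hnear⟩
end
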